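/- For 2 ≤ i ≤ n−1 and 1 ≤ j ≤ n−1, the element σ_j·x is a least common right-multiple of σ_j and σ_{i−1}σ_i in B_n^+, where: x = (σ_{i−1}σ_i)(σ_{i−2}σ_{i−1}) if j = i−2; x = σ_i if j = i−1; x = σ_{i−1}σ_iσ_{i+1} if j = i+1; and x = σ_{i−1}σ_i in all other cases. -/

import Mathlib

/-!
Common setup: the positive braid monoid `B_n^+` on `n` strands, presented by the
Artin generators `σ_1, …, σ_{n-1}` (1-based indexing) with the braid relations;
lex-representatives, forbidden prefixes, admissible functions, etc.
-/

namespace BraidPaper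

/-- Words in the Artin generators: the free monoid on `n - 1` letters. -/
abbrev Word (n : ℕ) := FreeMonoid (Fin (n - 1))

/-- The generator `σ_i` (`1 ≤ i ≤ n - 1`, 1-based) as a one-letter word;
the empty word for out-of-range indices. -/
def sigma (n : ℕ) (i : ℕ) : Word n :=
  if h : 1 ≤ i ∧ i ≤ n - 1 then FreeMonoid.of (⟨i - 1, by omega⟩ : Fin (n - 1)) else 1

/-- The braid relations. -/
inductive BraidRel (n : ℕ) : Word n → Word n → Prop
  | comm : ∀ i j : ℕ, 1 ≤ i → i ≤ n - 1 → 1 ≤ j → j ≤ n - 1 → (i + 2 ≤ j ∨ j + 2 ≤ i) →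
      BraidRel n (sigma n i * sigma n j) (sigma n j * sigma n i)
  | braid : ∀ i : ℕ, 1 ≤ i → i + 1 ≤ n - 1 →
      BraidRel n (sigma n i * sigma n (i + 1) * sigma n i)
        (sigma n (i + 1) * sigma n i * sigma n (i + 1))

/-- The congruence generated by the braid relations. -/
def braidCon (n : ℕ) : Con (Word n) := conGen (BraidRel n)

/-- The positive braid monoid `B_n^+`. -/
abbrev PB (n : ℕ) := (braidCon n).Quotient

/-- The canonical projection `b : A_n^* → B_n^+`. -/
def pr (n : ℕ) : Word n →* PB n := (braidCon n).mk'

/-- The length homomorphism on words (with values in `Multiplicative ℕ`). -/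
def lenHom (n : ℕ) : Word n →* Multiplicative ℕ :=
  FreeMonoid.lift fun _ => Multiplicative.ofAdd 1

lemma lenHom_sigma (n t : ℕ) (h1 : 1 ≤ t) (h2 : t ≤ n - 1) :
    lenHom n (sigma n t) = Multiplicative.ofAdd 1 := by
  rw [sigma, dif_pos ⟨h1, h2⟩]
  exact FreeMonoid.lift_eval_of _ _

lemma braidCon_le_ker (n : ℕ) : braidCon n ≤ Con.ker (lenHom n) := by
  refine Con.conGen_le.mpr ?_
  intro x y h
  rw [Con.ker_rel]
  cases h with
  | comm i j hi hi' hj hj' hij =>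
      rw [map_mul, map_mul, mul_comm]
  | braid i hi hi' =>
      rw [map_mul, map_mul, map_mul, map_mul,
        lenHom_sigma n i hi (by omega), lenHom_sigma n (i + 1) (by omega) hi']

/-- The (well-defined) length of a positive braid. -/
def len (n : ℕ) (x : PB n) : ℕ :=
  Multiplicative.toAdd (Con.lift _ (lenHom n) (braidCon_le_ker n) x)

/-- The length of a word. -/
def wlen {n : ℕ} (w : Word n) : ℕ := (FreeMonoid.toList w).length

/-- Strict lexicographic order on words, induced by `σ_1 < σ_2 < ⋯ < σ_{n-1}`. -/
def lexLt {n : ℕ} (u v : Word n) : Prop :=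
  List.Lex (· < ·) (FreeMonoid.toList u) (FreeMonoid.toList v)

/-- `L_n`: the set of lex-representatives, i.e. words that are `≤_lex`-minimal among
all words representing the same element of `B_n^+` (all of which have equal length). -/
def Ln (n : ℕ) : Set (Word n) :=
  {w | ∀ v : Word n, pr n v = pr n w → ¬ lexLt v w}

open Classical in
/-- `ω(β)`: the lex-representative of a positive braid `β`. -/
noncomputable def omegaRep (n : ℕ) (β : PB n) : Word n :=
  if h : ∃ w : Word n, pr n w = β ∧ w ∈ Ln n then h.choose else 1

/-- `F_n(w)`: the set of forbidden prefixes after `w`. -/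
def Fset (n : ℕ) (w : Word n) : Set (PB n) :=
  {α | w * omegaRep n α ∉ Ln n}

/-- Left-divisibility `a ≼ b` in `B_n^+`. -/
def ldvd (n : ℕ) (a b : PB n) : Prop := ∃ c : PB n, a * c = b

/-- The set of `≼`-minimal elements of a subset of `B_n^+`. -/
def minimals (n : ℕ) (S : Set (PB n)) : Set (PB n) :=
  {a | a ∈ S ∧ ∀ b ∈ S, ldvd n b a → b = a}

/-- `F_n^min(w)`: the set of minimal forbidden prefixes after `w`. -/
def Fmin (n : ℕ) (w : Word n) : Set (PB n) := minimals n (Fset n w)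

/-- `d` is a least common right-multiple of the set `S`. -/
def IsLcm (n : ℕ) (S : Set (PB n)) (d : PB n) : Prop :=
  (∀ a ∈ S, ldvd n a d) ∧ ∀ e : PB n, (∀ a ∈ S, ldvd n a e) → ldvd n d e

/-- The descending product `σ_a σ_{a-1} ⋯ σ_b` (empty if `b > a`). -/
def prodDesc (n a b : ℕ) : Word n :=
  (((List.range' b (a + 1 - b)).reverse).map (sigma n)).prod

/-- The ascending product `σ_a σ_{a+1} ⋯ σ_b` (empty if `a > b`). -/
def prodAsc (n a b : ℕ) : Word n :=
  ((List.range' a (b + 1 - a)).map (sigma n)).prod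

/-- Admissible functions `f : {1,…,n-1} → {-1,0,1,…,n-1}`. -/
def Admissible (n : ℕ) (f : ℕ → ℤ) : Prop :=
  (∀ i : ℕ, 1 ≤ i → i ≤ n - 1 → -1 ≤ f i ∧ f i ≤ (i : ℤ)) ∧ f 1 ≠ -1

/-- The set `F_f ⊆ B_n^+` associated to an admissible function `f`: the elements
`σ_i σ_{i-1} ⋯ σ_{f(i)}` for `i` with `1 ≤ f(i) ≤ i`, together with the elements
`σ_{i-1} σ_i` for `i` with `f(i) = -1`. -/
def Ff (n : ℕ) (f : ℕ → ℤ) : Set (PB n) :=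
  {x | ∃ i : ℕ, 1 ≤ i ∧ i ≤ n - 1 ∧ 1 ≤ f i ∧ f i ≤ (i : ℤ) ∧
        x = pr n (prodDesc n i (f i).toNat)} ∪
  {x | ∃ i : ℕ, 1 ≤ i ∧ i ≤ n - 1 ∧ f i = -1 ∧ x = pr n (sigma n (i - 1) * sigma n i)}

/-- `F_n^min(w, m)`: the set of `≼`-minimal elements of `{σ_1,…,σ_m} ∪ F_n^min(w)`. -/
def FminM (n : ℕ) (w : Word n) (m : ℕ) : Set (PB n) :=
  minimals n ({x | ∃ i : ℕ, 1 ≤ i ∧ i ≤ m ∧ x = pr n (sigma n i)} ∪ Fmin n w)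

/-- `x_{n,j}` (for `j : ℤ`): the number of elements of `B_n^+` of length `j`
(`0` for negative `j`). -/
noncomputable def xcount (n : ℕ) (j : ℤ) : ℕ :=
  Nat.card {x : PB n // (len n x : ℤ) = j}

/-- `x_{n,k}(w,m)`: the number of words in `L_n` of length `k` of the form `w·w'`,
where `w'` does not begin with any of `σ_1, …, σ_m`. -/
noncomputable def xwm (n k : ℕ) (w : Word n) (m : ℕ) : ℕ :=
  Nat.card {v : Word n // wlen v = k ∧ v ∈ Ln n ∧
    ∃ w' : Word n, v = w * w' ∧
      ∀ i : ℕ, 1 ≤ i → i ≤ m → ¬ ∃ u : Word n, w' = sigma n i * u}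


/-!
The key fact is Garside's lemma in the following form. Write `a \ b` for `1` if `a = b`,
for `σ_b` if `|a - b| ≥ 2` and for `σ_b σ_a` if `|a - b| = 1`, so that `σ_a (a \ b) = σ_b (b \ a)`.
Then every equation `σ_a x = σ_b y` in `B_n^+` factors as `x = (a \ b) z`, `y = (b \ a) z`.
For words of a fixed length this is proved by induction on the derivation of `σ_a u ≡ σ_b v`
from the braid relations: one relation applied at the head is such a factorisation, and two
factorisations `(a, x) ~ (c, t) ~ (b, y)` compose to one of `(a, x) ~ (b, y)`. Composing is a
case analysis on the relative position of `a`, `b`, `c` which only invokes the lemma for words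
shorter than `t`. Each of the least common multiples of the theorem then drops out of at most
three applications of the lemma.
-/

section Generators

variable {n : ℕ}

def GenIndex (n a : ℕ) : Prop := 1 ≤ a ∧ a ≤ n - 1

def gen (n a : ℕ) : PB n := pr n (sigma n a)

lemma pr_sigma (n a : ℕ) : pr n (sigma n a) = gen n a := rfl

lemma pr_eq_of_conGen {w w' : Word n} (h : ConGen.Rel (BraidRel n) w w') : pr n w = pr n w' :=
  (Con.eq _).mpr h

lemma gen_mul_gen_mul_comm {a b : ℕ} (ha : GenIndex n a) (hb : GenIndex n b)
    (hab : a + 2 ≤ b ∨ b + 2 ≤ a) (x : PB n) :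
    gen n a * (gen n b * x) = gen n b * (gen n a * x) := by
  have h := pr_eq_of_conGen (ConGen.Rel.of _ _ (BraidRel.comm a b ha.1 ha.2 hb.1 hb.2 hab))
  simp only [map_mul, pr_sigma] at h
  rw [← mul_assoc, h, mul_assoc]

lemma gen_braid {a b : ℕ} (ha : GenIndex n a) (hb : GenIndex n b) (hab : a + 1 = b ∨ b + 1 = a)
    (x : PB n) :
    gen n a * (gen n b * (gen n a * x)) = gen n b * (gen n a * (gen n b * x)) := by
  rcases hab with rfl | rfl
  · have h := pr_eq_of_conGen (ConGen.Rel.of _ _ (BraidRel.braid a ha.1 hb.2))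
    simp only [map_mul, pr_sigma] at h
    simp only [← mul_assoc, h]
  · have h := pr_eq_of_conGen (ConGen.Rel.of _ _ (BraidRel.braid b hb.1 ha.2))
    simp only [map_mul, pr_sigma] at h
    simp only [← mul_assoc, h]

variable {p q r : ℕ}

lemma gen_path_rotate (hp : GenIndex n p) (hq : GenIndex n q) (hr : GenIndex n r)
    (hpq : p + 1 = q ∨ q + 1 = p) (hqr : q + 1 = r ∨ r + 1 = q)
    (hpr : p + 2 ≤ r ∨ r + 2 ≤ p) (x : PB n) :
    gen n p * (gen n q * (gen n r * (gen n p * (gen n q * x)))) =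
      gen n q * (gen n r * (gen n p * (gen n q * (gen n r * x)))) := by
  rw [gen_mul_gen_mul_comm hr hp (by omega), gen_braid hp hq hpq, gen_braid hq hr hqr,
    gen_mul_gen_mul_comm hp hr hpr]

lemma gen_path_palindrome (hp : GenIndex n p) (hq : GenIndex n q) (hr : GenIndex n r)
    (hpq : p + 1 = q ∨ q + 1 = p) (hqr : q + 1 = r ∨ r + 1 = q)
    (hpr : p + 2 ≤ r ∨ r + 2 ≤ p) (x : PB n) :
    gen n p * (gen n q * (gen n r * (gen n q * (gen n p * x)))) =
      gen n r * (gen n q * (gen n p * (gen n q * (gen n r * x)))) := by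
  rw [gen_braid hq hr hqr, gen_mul_gen_mul_comm hp hr hpr,
    gen_mul_gen_mul_comm hr hp (by omega) x, gen_braid hp hq hpq]

end Generators

section Words

variable {n : ℕ}

lemma len_mul (x y : PB n) : len n (x * y) = len n x + len n y := by
  simp [len, map_mul]

lemma len_one : len n 1 = 0 := by
  simp [len]

lemma len_gen_mul {a : ℕ} (ha : GenIndex n a) (x : PB n) :
    len n (gen n a * x) = len n x + 1 := by
  rw [len_mul, add_comm]
  simp [len, gen, pr, lenHom_sigma n a ha.1 ha.2]

lemma len_pr_sigma_mul {a : ℕ} (ha : GenIndex n a) (u : Word n) :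
    len n (pr n (sigma n a * u)) = len n (pr n u) + 1 := by
  rw [map_mul, pr_sigma, len_gen_mul ha]

lemma sigma_mul_inj {a b : ℕ} {u v : Word n} (ha : GenIndex n a) (hb : GenIndex n b)
    (h : sigma n a * u = sigma n b * v) : a = b ∧ u = v := by
  rw [sigma, dif_pos (show 1 ≤ a ∧ a ≤ n - 1 from ha), sigma,
    dif_pos (show 1 ≤ b ∧ b ≤ n - 1 from hb)] at h
  have h' := congrArg FreeMonoid.toList h
  simp only [FreeMonoid.toList_mul, FreeMonoid.toList_of, List.singleton_append,
    List.cons.injEq, Fin.mk.injEq] at h'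
  exact ⟨by have := ha.1; have := hb.1; omega, FreeMonoid.toList.injective h'.2⟩

lemma word_eq_one_or_sigma_mul (w : Word n) :
    w = 1 ∨ ∃ c t, GenIndex n c ∧ w = sigma n c * t := by
  induction w using FreeMonoid.casesOn with
  | one => exact Or.inl rfl
  | of_mul c t =>
    have hc : GenIndex n (c.1 + 1) := ⟨by omega, by omega⟩
    refine Or.inr ⟨c.1 + 1, t, hc, ?_⟩
    rw [sigma, dif_pos (show 1 ≤ c.1 + 1 ∧ c.1 + 1 ≤ n - 1 from hc)]
    rfl

end Words

section Complement

variable {n : ℕ}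

/-- `complement n a b` is the `a \ b` of the header. -/
def complement (n a b : ℕ) : PB n :=
  if a = b then 1 else if a + 1 = b ∨ b + 1 = a then gen n b * gen n a else gen n b

lemma complement_self (a : ℕ) : complement n a a = 1 := by
  simp [complement]

lemma complement_of_far {a b : ℕ} (h : a + 2 ≤ b ∨ b + 2 ≤ a) : complement n a b = gen n b := by
  rw [complement, if_neg (by omega), if_neg (by omega)]

lemma complement_of_adj {a b : ℕ} (h : a + 1 = b ∨ b + 1 = a) :
    complement n a b = gen n b * gen n a := by
  rw [complement, if_neg (by omega), if_pos h]

lemma gen_mul_complement_mul_comm {a b c : ℕ} (ha : GenIndex n a) (hb : GenIndex n b)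
    (hc : GenIndex n c) (hca : c + 2 ≤ a ∨ a + 2 ≤ c) (hcb : c + 2 ≤ b ∨ b + 2 ≤ c) (x : PB n) :
    gen n c * (complement n a b * x) = complement n a b * (gen n c * x) := by
  unfold complement
  split_ifs
  · simp
  · rw [mul_assoc, gen_mul_gen_mul_comm hc hb hcb, gen_mul_gen_mul_comm hc ha hca, mul_assoc]
  · rw [gen_mul_gen_mul_comm hc hb hcb]

def FactorsThroughLcm (n a : ℕ) (x : PB n) (b : ℕ) (y : PB n) : Prop :=
  ∃ z, x = complement n a b * z ∧ y = complement n b a * z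

namespace FactorsThroughLcm

variable {a b : ℕ} {x y : PB n}

lemma refl (a : ℕ) (x : PB n) : FactorsThroughLcm n a x a x :=
  ⟨x, by rw [complement_self, one_mul], by rw [complement_self, one_mul]⟩

lemma symm (h : FactorsThroughLcm n a x b y) : FactorsThroughLcm n b y a x :=
  let ⟨z, hx, hy⟩ := h
  ⟨z, hy, hx⟩

lemma mul_right (h : FactorsThroughLcm n a x b y) (e : PB n) :
    FactorsThroughLcm n a (x * e) b (y * e) :=
  let ⟨z, hx, hy⟩ := h
  ⟨z * e, by rw [hx, mul_assoc], by rw [hy, mul_assoc]⟩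

lemma eq_of_self {y : PB n} (h : FactorsThroughLcm n a x a y) : x = y := by
  obtain ⟨z, rfl, rfl⟩ := h
  rfl

lemma of_far (hab : a + 2 ≤ b ∨ b + 2 ≤ a) (h : FactorsThroughLcm n a x b y) :
    ∃ z, x = gen n b * z ∧ y = gen n a * z := by
  simpa only [FactorsThroughLcm, complement_of_far hab, complement_of_far (a := b) (b := a) (by omega)]
    using h

lemma of_adj (hab : a + 1 = b ∨ b + 1 = a) (h : FactorsThroughLcm n a x b y) :
    ∃ z, x = gen n b * (gen n a * z) ∧ y = gen n a * (gen n b * z) := by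
  simpa only [FactorsThroughLcm, complement_of_adj hab, complement_of_adj (a := b) (b := a) (by omega),
    mul_assoc] using h

end FactorsThroughLcm

end Complement

section Cube

variable {n : ℕ}

def LcmPropertyBelow (n m : ℕ) : Prop :=
  ∀ (a b : ℕ) (x y : PB n), GenIndex n a → GenIndex n b → len n x < m →
    gen n a * x = gen n b * y → FactorsThroughLcm n a x b y

lemma LcmPropertyBelow.mono {m k : ℕ} (h : LcmPropertyBelow n m) (hkm : k ≤ m) :
    LcmPropertyBelow n k :=
  fun a b x y ha hb hx => h a b x y ha hb (by omega)

lemma LcmPropertyBelow.left_cancel {m a : ℕ} {x y : PB n} (h : LcmPropertyBelow n m)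
    (ha : GenIndex n a) (hx : len n x < m) (hxy : gen n a * x = gen n a * y) : x = y :=
  (h a a x y ha ha hx hxy).eq_of_self

namespace FactorsThroughLcm

variable {a b c : ℕ} {x y t : PB n}

lemma trans_of_far_of_far (hm : LcmPropertyBelow n (len n t)) (ha : GenIndex n a)
    (hb : GenIndex n b) (hc : GenIndex n c) (hca : c + 2 ≤ a ∨ a + 2 ≤ c)
    (hcb : c + 2 ≤ b ∨ b + 2 ≤ c) (h₁ : FactorsThroughLcm n a x c t)
    (h₂ : FactorsThroughLcm n c t b y) : FactorsThroughLcm n a x b y := by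
  obtain ⟨z₁, rfl, rfl⟩ := h₁.of_far (by omega)
  obtain ⟨z₂, ht, rfl⟩ := h₂.of_far hcb
  obtain ⟨w, rfl, rfl⟩ := hm a b z₁ z₂ ha hb (by rw [len_gen_mul ha]; omega) ht
  exact ⟨gen n c * w, gen_mul_complement_mul_comm ha hb hc hca hcb w,
    gen_mul_complement_mul_comm hb ha hc hcb hca w⟩

lemma trans_of_far_of_adj (hm : LcmPropertyBelow n (len n t)) (ha : GenIndex n a)
    (hb : GenIndex n b) (hc : GenIndex n c) (hca : c + 2 ≤ a ∨ a + 2 ≤ c)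
    (hcb : c + 1 = b ∨ b + 1 = c) (h₁ : FactorsThroughLcm n a x c t)
    (h₂ : FactorsThroughLcm n c t b y) : FactorsThroughLcm n a x b y := by
  obtain ⟨z₁, rfl, rfl⟩ := h₁.of_far (by omega)
  obtain ⟨z₂, ht, rfl⟩ := h₂.of_adj hcb
  have hlen := congrArg (len n) ht
  by_cases hab : a + 2 ≤ b ∨ b + 2 ≤ a
  · obtain ⟨w, rfl, hw⟩ := (hm a b _ _ ha hb (by simp only [len_gen_mul ha]; omega) ht).of_far hab
    obtain ⟨w', rfl, rfl⟩ := (hm c a _ _ hc ha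
      (by simp only [len_gen_mul, ha, hb, hc] at hlen ⊢; omega) hw).of_far hca
    refine ⟨gen n c * (gen n b * w'), ?_, ?_⟩
    · rw [complement_of_far hab, gen_braid hc hb hcb]
    · rw [complement_of_far (b := a) (by omega), gen_mul_gen_mul_comm hb ha (by omega),
        gen_mul_gen_mul_comm hc ha hca]
  · have hab : a + 1 = b ∨ b + 1 = a := by omega
    obtain ⟨w, rfl, hw⟩ := (hm a b _ _ ha hb (by simp only [len_gen_mul ha]; omega) ht).of_adj hab
    obtain ⟨w', rfl, hw'⟩ := (hm c a _ _ hc ha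
      (by simp only [len_gen_mul, ha, hb, hc] at hlen ⊢; omega) hw).of_far hca
    obtain ⟨w'', rfl, rfl⟩ := (hm b c _ _ hb hc
      (by simp only [len_gen_mul, ha, hb, hc] at hlen ⊢; omega) hw').of_adj (by omega)
    refine ⟨gen n c * (gen n b * (gen n a * w'')), ?_, ?_⟩
    · rw [complement_of_adj hab, mul_assoc, gen_path_rotate hc hb ha (by omega) (by omega) (by omega)]
    · rw [complement_of_adj (b := a) (by omega), mul_assoc,
        gen_path_palindrome hc hb ha (by omega) (by omega) (by omega)]

lemma trans_of_adj_of_adj (hm : LcmPropertyBelow n (len n t)) (ha : GenIndex n a)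
    (hb : GenIndex n b) (hc : GenIndex n c) (hca : c + 1 = a ∨ a + 1 = c)
    (hcb : c + 1 = b ∨ b + 1 = c) (h₁ : FactorsThroughLcm n a x c t)
    (h₂ : FactorsThroughLcm n c t b y) : FactorsThroughLcm n a x b y := by
  obtain ⟨z₁, rfl, rfl⟩ := h₁.of_adj (by omega)
  obtain ⟨z₂, ht, rfl⟩ := h₂.of_adj hcb
  have hlen := congrArg (len n) ht
  rcases eq_or_ne a b with rfl | hab
  · obtain rfl := hm.left_cancel hc (by simp only [len_gen_mul, ha, hc]; omega)
      (hm.left_cancel ha (by simp only [len_gen_mul ha]; omega) ht)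
    exact refl a _
  have hab : a + 2 ≤ b ∨ b + 2 ≤ a := by omega
  obtain ⟨w, hw₁, hw₂⟩ := (hm a b _ _ ha hb (by simp only [len_gen_mul ha]; omega) ht).of_far hab
  obtain ⟨w₁, rfl, rfl⟩ := (hm c b _ _ hc hb (by simp only [len_gen_mul, ha, hc]; omega) hw₁).of_adj hcb
  obtain ⟨w₂, rfl, hw⟩ := (hm c a _ _ hc ha
    (by simp only [len_gen_mul, ha, hb, hc] at hlen ⊢; omega) hw₂).of_adj hca
  obtain ⟨w₃, rfl, rfl⟩ := (hm b a _ _ hb ha (by simp only [len_gen_mul, ha, hb, hc]; omega)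
    (hm.left_cancel hc (by simp only [len_gen_mul, ha, hb, hc]; omega) hw)).of_far (by omega)
  refine ⟨gen n c * (gen n a * (gen n b * (gen n c * w₃))), ?_, ?_⟩
  · rw [complement_of_far hab, gen_path_rotate hb hc ha (by omega) (by omega) (by omega)]
  · rw [complement_of_far (b := a) (by omega), ← gen_path_rotate ha hc hb (by omega) (by omega)
      (by omega), gen_mul_gen_mul_comm ha hb (by omega)]

lemma trans (hm : LcmPropertyBelow n (len n t)) (ha : GenIndex n a) (hb : GenIndex n b)
    (hc : GenIndex n c) (h₁ : FactorsThroughLcm n a x c t) (h₂ : FactorsThroughLcm n c t b y) :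
    FactorsThroughLcm n a x b y := by
  rcases eq_or_ne a c with rfl | hac
  · rwa [h₁.eq_of_self]
  rcases eq_or_ne c b with rfl | hcb
  · rwa [← h₂.eq_of_self]
  by_cases hca : c + 2 ≤ a ∨ a + 2 ≤ c <;> by_cases hcb' : c + 2 ≤ b ∨ b + 2 ≤ c
  · exact trans_of_far_of_far hm ha hb hc hca hcb' h₁ h₂
  · exact trans_of_far_of_adj hm ha hb hc hca (by omega) h₁ h₂
  · exact (trans_of_far_of_adj hm hb ha hc hcb' (by omega) h₂.symm h₁.symm).symm
  · exact trans_of_adj_of_adj hm ha hb hc (by omega) (by omega) h₁ h₂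

end FactorsThroughLcm

end Cube

section Garside

variable {n : ℕ}

lemma factorsThroughLcm_of_braidRel {a b : ℕ} {l r u v : Word n} (ha : GenIndex n a)
    (hb : GenIndex n b) (hlr : BraidRel n l r) (hl : l = sigma n a * u) (hr : r = sigma n b * v) :
    FactorsThroughLcm n a (pr n u) b (pr n v) := by
  cases hlr with
  | comm i j hi hi' hj hj' hij =>
    obtain ⟨rfl, rfl⟩ := sigma_mul_inj ⟨hi, hi'⟩ ha hl
    obtain ⟨rfl, rfl⟩ := sigma_mul_inj ⟨hj, hj'⟩ hb hr
    refine ⟨1, ?_, ?_⟩ <;> rw [complement_of_far (by omega), mul_one, pr_sigma]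
  | braid i hi hi' =>
    rw [mul_assoc] at hl hr
    obtain ⟨rfl, rfl⟩ := sigma_mul_inj ⟨hi, by omega⟩ ha hl
    obtain ⟨rfl, rfl⟩ := sigma_mul_inj ⟨by omega, hi'⟩ hb hr
    refine ⟨1, ?_, ?_⟩ <;> rw [complement_of_adj (by omega), mul_one, map_mul, pr_sigma, pr_sigma]

lemma factorsThroughLcm_of_conGen {m : ℕ} (hm : LcmPropertyBelow n m) {w w' : Word n}
    (h : ConGen.Rel (BraidRel n) w w') :
    ∀ {a b : ℕ} {u v : Word n}, GenIndex n a → GenIndex n b → w = sigma n a * u →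
      w' = sigma n b * v → len n (pr n u) ≤ m → FactorsThroughLcm n a (pr n u) b (pr n v) := by
  induction h with
  | of l r hlr => exact fun ha hb hl hr _ => factorsThroughLcm_of_braidRel ha hb hlr hl hr
  | refl w =>
    intro a b u v ha hb hu hv _
    obtain ⟨rfl, rfl⟩ := sigma_mul_inj ha hb (hu.symm.trans hv)
    exact .refl a _
  | symm h ih =>
    intro a b u v ha hb hu hv hlen
    have := congrArg (len n) (pr_eq_of_conGen h)
    rw [hu, hv, len_pr_sigma_mul ha, len_pr_sigma_mul hb] at this
    exact (ih hb ha hv hu (by omega)).symm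
  | @trans w₁ w₂ w₃ h₁₂ h₂₃ ih₁₂ ih₂₃ =>
    intro a b u v ha hb hu hv hlen
    have hlen₂ := congrArg (len n) (pr_eq_of_conGen h₁₂)
    rcases word_eq_one_or_sigma_mul w₂ with rfl | ⟨c, t, hc, rfl⟩
    · rw [hu, len_pr_sigma_mul ha, map_one, len_one] at hlen₂
      omega
    · rw [hu, len_pr_sigma_mul ha, len_pr_sigma_mul hc] at hlen₂
      exact (ih₁₂ ha hc hu rfl hlen).trans (hm.mono (by omega)) ha hb hc
        (ih₂₃ hc hb rfl hv (by omega))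
  | @mul w₁ w₁' w₂ w₂' h₁ h₂ ih₁ ih₂ =>
    intro a b u v ha hb hu hv hlen
    have hlen₁ := congrArg (len n) (pr_eq_of_conGen h₁)
    rcases word_eq_one_or_sigma_mul w₁ with rfl | ⟨c, t, hc, rfl⟩ <;>
      rcases word_eq_one_or_sigma_mul w₁' with rfl | ⟨d, t', hd, rfl⟩
    · rw [one_mul] at hu hv
      exact ih₂ ha hb hu hv hlen
    · rw [len_pr_sigma_mul hd, map_one, len_one] at hlen₁
      omega
    · rw [len_pr_sigma_mul hc, map_one, len_one] at hlen₁
      omega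
    · rw [mul_assoc] at hu hv
      obtain ⟨rfl, rfl⟩ := sigma_mul_inj hc ha hu
      obtain ⟨rfl, rfl⟩ := sigma_mul_inj hd hb hv
      rw [map_mul, len_mul] at hlen
      rw [map_mul, map_mul, pr_eq_of_conGen h₂]
      exact (ih₁ hc hd rfl rfl (by omega)).mul_right _

lemma LcmPropertyBelow.succ {m : ℕ} (hm : LcmPropertyBelow n m) : LcmPropertyBelow n (m + 1) := by
  intro a b x y ha hb hx hxy
  obtain ⟨u, rfl⟩ : ∃ u, pr n u = x := (braidCon n).mk'_surjective x
  obtain ⟨v, rfl⟩ : ∃ v, pr n v = y := (braidCon n).mk'_surjective y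
  have hw : pr n (sigma n a * u) = pr n (sigma n b * v) := by
    rw [map_mul, map_mul]
    exact hxy
  exact factorsThroughLcm_of_conGen hm ((Con.eq _).mp hw) ha hb rfl rfl (by omega)

lemma lcmPropertyBelow (n m : ℕ) : LcmPropertyBelow n m := by
  induction m with
  | zero => exact fun _ _ _ _ _ _ hx => absurd hx (Nat.not_lt_zero _)
  | succ m ih => exact ih.succ

theorem factorsThroughLcm_of_gen_mul_eq {a b : ℕ} {x y : PB n} (ha : GenIndex n a)
    (hb : GenIndex n b) (h : gen n a * x = gen n b * y) : FactorsThroughLcm n a x b y :=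
  lcmPropertyBelow n _ a b x y ha hb (Nat.lt_succ_self _) h

end Garside

section Lcm

variable {n : ℕ}

lemma isLcm_pair {p q d : PB n} (hp : ldvd n p d) (hq : ldvd n q d)
    (hleast : ∀ e, ldvd n p e → ldvd n q e → ldvd n d e) : IsLcm n {p, q} d :=
  ⟨by rintro _ (rfl | rfl) <;> assumption,
    fun e he => hleast e (he p (Set.mem_insert _ _)) (he q (Set.mem_insert_of_mem _ rfl))⟩

lemma isLcm_pair_of_ldvd {p q : PB n} (h : ldvd n p q) : IsLcm n {p, q} q :=
  isLcm_pair h ⟨1, mul_one q⟩ fun _ _ he => he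

variable {a b j : ℕ}

lemma isLcm_gen_gen_mul_of_far (ha : GenIndex n a) (hb : GenIndex n b) (hj : GenIndex n j)
    (hja : j + 2 ≤ a ∨ a + 2 ≤ j) (hjb : j + 2 ≤ b ∨ b + 2 ≤ j) :
    IsLcm n {gen n j, gen n a * gen n b} (gen n j * (gen n a * gen n b)) := by
  refine isLcm_pair ⟨_, rfl⟩ ⟨gen n j, ?_⟩ ?_
  · have key (x : PB n) : gen n a * (gen n b * (gen n j * x)) = gen n j * (gen n a * (gen n b * x)) := by
      rw [gen_mul_gen_mul_comm hb hj (by omega), gen_mul_gen_mul_comm ha hj (by omega)]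
    simpa only [mul_assoc, mul_one] using key 1
  · rintro e ⟨u, rfl⟩ ⟨v, hv⟩
    obtain ⟨z, rfl, hz⟩ :=
      (factorsThroughLcm_of_gen_mul_eq hj ha (by rw [← hv, mul_assoc])).of_far hja
    obtain ⟨w, rfl, -⟩ := (factorsThroughLcm_of_gen_mul_eq hj hb hz.symm).of_far hjb
    exact ⟨w, by simp only [mul_assoc]⟩

lemma isLcm_gen_gen_mul_self_right (ha : GenIndex n a) (hb : GenIndex n b)
    (hab : a + 1 = b ∨ b + 1 = a) :
    IsLcm n {gen n b, gen n a * gen n b} (gen n b * (gen n a * gen n b)) := by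
  refine isLcm_pair ⟨_, rfl⟩ ⟨gen n a, ?_⟩ ?_
  · simpa only [mul_assoc, mul_one] using gen_braid ha hb hab 1
  · rintro e ⟨u, rfl⟩ ⟨v, hv⟩
    obtain ⟨z, rfl, -⟩ :=
      (factorsThroughLcm_of_gen_mul_eq hb ha (by rw [← hv, mul_assoc])).of_adj (by omega)
    exact ⟨z, by simp only [mul_assoc]⟩

lemma isLcm_gen_gen_mul_of_adj_right (ha : GenIndex n a) (hb : GenIndex n b) (hj : GenIndex n j)
    (hja : j + 2 ≤ a ∨ a + 2 ≤ j) (hjb : j + 1 = b ∨ b + 1 = j) :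
    IsLcm n {gen n j, gen n a * gen n b} (gen n j * (gen n a * (gen n b * gen n j))) := by
  refine isLcm_pair ⟨_, rfl⟩ ⟨gen n j * gen n b, ?_⟩ ?_
  · have key (x : PB n) :
        gen n a * (gen n b * (gen n j * (gen n b * x))) =
          gen n j * (gen n a * (gen n b * (gen n j * x))) := by
      rw [gen_braid hb hj (by omega), gen_mul_gen_mul_comm ha hj (by omega)]
    simpa only [mul_assoc, mul_one] using key 1
  · rintro e ⟨u, rfl⟩ ⟨v, hv⟩
    obtain ⟨z, rfl, hz⟩ :=
      (factorsThroughLcm_of_gen_mul_eq hj ha (by rw [← hv, mul_assoc])).of_far hja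
    obtain ⟨w, -, rfl⟩ := (factorsThroughLcm_of_gen_mul_eq hb hj hz).of_adj (by omega)
    exact ⟨w, by simp only [mul_assoc]⟩

lemma isLcm_gen_gen_mul_of_adj_left (ha : GenIndex n a) (hb : GenIndex n b) (hj : GenIndex n j)
    (hja : j + 1 = a ∨ a + 1 = j) (hjb : j + 2 ≤ b ∨ b + 2 ≤ j) (hab : a + 1 = b ∨ b + 1 = a) :
    IsLcm n {gen n j, gen n a * gen n b}
      (gen n j * (gen n a * (gen n b * (gen n j * gen n a)))) := by
  refine isLcm_pair ⟨_, rfl⟩ ⟨gen n j * (gen n a * gen n b), ?_⟩ ?_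
  · simpa only [mul_assoc, mul_one] using (gen_path_rotate hj ha hb hja hab hjb 1).symm
  · rintro e ⟨u, rfl⟩ ⟨v, hv⟩
    obtain ⟨z, rfl, hz⟩ :=
      (factorsThroughLcm_of_gen_mul_eq hj ha (by rw [← hv, mul_assoc])).of_adj hja
    obtain ⟨w, rfl, hw⟩ := (factorsThroughLcm_of_gen_mul_eq hb hj hz).of_far (by omega)
    obtain ⟨w', rfl, -⟩ := (factorsThroughLcm_of_gen_mul_eq ha hb hw).of_adj hab
    refine ⟨w', ?_⟩
    rw [gen_mul_gen_mul_comm hj hb hjb]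
    simp only [mul_assoc]

end Lcm

theorem statement_4_general (n : ℕ) (i j : ℕ) (hi : 2 ≤ i) (hi' : i ≤ n - 1)
    (hj : 1 ≤ j) (hj' : j ≤ n - 1) :
    IsLcm n {pr n (sigma n j), pr n (sigma n (i - 1) * sigma n i)}
      (pr n (sigma n j) *
        pr n (if j = i - 2 then (sigma n (i - 1) * sigma n i) * (sigma n (i - 2) * sigma n (i - 1))
          else if j = i - 1 then sigma n i
          else if j = i + 1 then sigma n (i - 1) * sigma n i * sigma n (i + 1)
          else sigma n (i - 1) * sigma n i)) := by
  have hgj : GenIndex n j := ⟨hj, hj'⟩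
  have hgi : GenIndex n i := ⟨by omega, hi'⟩
  have hgi₁ : GenIndex n (i - 1) := ⟨by omega, by omega⟩
  split_ifs with h₂ h₁ h₃ <;> simp only [map_mul, pr_sigma, mul_assoc]
  · subst h₂
    exact isLcm_gen_gen_mul_of_adj_left hgi₁ hgi hgj (by omega) (by omega) (by omega)
  · subst h₁
    exact isLcm_pair_of_ldvd ⟨gen n i, rfl⟩
  · subst h₃
    exact isLcm_gen_gen_mul_of_adj_right hgi₁ hgi hgj (by omega) (by omega)
  · rcases eq_or_ne j i with rfl | hji
    · exact isLcm_gen_gen_mul_self_right hgi₁ hgj (by omega)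
    · exact isLcm_gen_gen_mul_of_far hgi₁ hgi hgj (by omega) (by omega)

/-- the value of `σ_j ∖ (σ_(i-1)σ_i)`, via least common right-multiples. -/
theorem statement_4 (n : ℕ) (hn : 2 ≤ n) (i j : ℕ) (hi : 2 ≤ i) (hi' : i ≤ n - 1)
    (hj : 1 ≤ j) (hj' : j ≤ n - 1) :
    IsLcm n {pr n (sigma n j), pr n (sigma n (i - 1) * sigma n i)}
      (pr n (sigma n j) *
        pr n (if j = i - 2 then (sigma n (i - 1) * sigma n i) * (sigma n (i - 2) * sigma n (i - 1))
          else if j = i - 1 then sigma n i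
          else if j = i + 1 then sigma n (i - 1) * sigma n i * sigma n (i + 1)
          else sigma n (i - 1) * sigma n i)) :=
  statement_4_general n i j hi hi' hj hj'

end BraidPaper
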